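/- Let d, n, p ≥ 1 and let Z ⊆ ℝ^d have nonempty interior. Assume: (a) for every coordinate r, the projection Z_r is bounded, with infimum β_inf^r and supremum β_sup^r, and there exists ζ > 0 such that the boundary strips B_r = (β_inf^r, β_inf^r + ζ) ∪ (β_sup^r − ζ, β_sup^r) satisfy B_r ⊆ Z_r and ∏_{r=1}^d B_r ⊆ Z; and (b) Z_{r,s} = Z_r × Z_s for all r ≠ s. Let g(z) = G φ_p(z) with G ∈ ℝ^{n×M_{d,p}} of full column rank, h(z̃) = H φ_p(z̃) with H ∈ ℝ^{n×M_{d,p}}, and let f : ℝ^n → ℝ^d satisfy h(f(x)) = x for all x ∈ g(Z), with f(g(Z)) having nonempty interior. Suppose the image Ẑ = f(g(Z)) satisfies Ẑ_{k,m} = Ẑ_k × Ẑ_m for all k ≠ m. Then there exist a permutation matrix Π, an invertible diagonal matrix Λ, and c ∈ ℝ^d such that f(g(z)) = Λ Π z + c for all z ∈ Z. -/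

import Mathlib

/-- The finite set of multi-indices `m : Fin d → ℕ` (encoded with values in `Fin (p+1)`)
with total degree `∑ k, m k ≤ p`. -/
abbrev MultiIdx (d p : ℕ) : Type := {m : Fin d → Fin (p + 1) // ∑ k, (m k : ℕ) ≤ p}

/-- The monomial feature map `φ_p(z)_m = ∏ k, z k ^ (m k)`. -/
noncomputable def phi (d p : ℕ) (z : Fin d → ℝ) : MultiIdx d p → ℝ :=
  fun m => ∏ k, z k ^ (m.1 k : ℕ)

/-- Projection of a set `W ⊆ ℝ^d` onto coordinate `r`. -/
def proj {d : ℕ} (r : Fin d) (W : Set (Fin d → ℝ)) : Set ℝ :=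
  (fun z => z r) '' W

/-- Projection of a set `W ⊆ ℝ^d` onto the coordinate pair `(r, s)`. -/
def proj2 {d : ℕ} (r s : Fin d) (W : Set (Fin d → ℝ)) : Set (ℝ × ℝ) :=
  (fun z => (z r, z s)) '' W

/-!
Write `w = f ∘ g`. Applying a left inverse of `G` to the reconstruction identity shows that each
monomial of `z ∈ Z` is a polynomial of degree `≤ p` in `w z`. The coordinate ones `a_k` satisfy
`a_k ^ p = q_k` with `deg q_k ≤ p` on the set `w(Z)` with nonempty interior, hence identically,
so `deg a_k ≤ 1`. Thus `A (w z) + a = z` on `Z`, where `A` is invertible because `Z` has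
interior points, i.e. `w z = M z + c` with `M = A⁻¹`.

If column `s` of `M` had nonzero entries in rows `k ≠ m`, take points of the boundary strips
near the corners of the bounding box at which `M_k ⬝ᵥ z` and `± M_m ⬝ᵥ z` are nearly maximal,
with the sign chosen so that the two corners lie on opposite faces `z_s = βinf s`,
`z_s = βsup s`. Support independence of `w(Z)` yields a single `z ∈ Z` that nearly maximizes
both functionals, forcing `z_s` to be close to both faces. So every column of `M` has a single
nonzero entry, and `M` is a scaled permutation.
-/

open MvPolynomial Matrix

namespace MvPolynomial

variable {σ : Type*}

theorem eq_of_eqOn_of_nonempty_interior [Fintype σ] {P Q : MvPolynomial σ ℝ}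
    {U : Set (σ → ℝ)} (hU : (interior U).Nonempty)
    (h : Set.EqOn (fun x => eval x P) (fun x => eval x Q) U) : P = Q := by
  obtain ⟨x, hx⟩ := hU
  obtain ⟨ε, hε, hball⟩ := Metric.isOpen_iff.mp isOpen_interior x hx
  refine funext_set (fun i => Metric.ball (x i) ε) (fun i => ?_) fun y hy => ?_
  · rw [Real.ball_eq_Ioo]
    exact Set.Ioo_infinite (by linarith)
  · rw [← ball_pi x hε] at hy
    exact h (interior_subset (hball hy))

section Degree

variable {R : Type*} [CommRing R]

theorem totalDegree_pow_of_isDomain [IsDomain R] (P : MvPolynomial σ R) (n : ℕ) :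
    (P ^ n).totalDegree = n * P.totalDegree := by
  rcases eq_or_ne P 0 with rfl | hP
  · rcases n with _ | n <;> simp
  induction n with
  | zero => simp
  | succ n ih =>
    rw [pow_succ, totalDegree_mul_of_isDomain (pow_ne_zero n hP) hP, ih]
    ring

theorem totalDegree_le_one_of_totalDegree_pow_le [IsDomain R] {P : MvPolynomial σ R} {n : ℕ}
    (hn : 0 < n) (h : (P ^ n).totalDegree ≤ n) : P.totalDegree ≤ 1 := by
  rw [totalDegree_pow_of_isDomain] at h
  exact le_of_mul_le_mul_left (by simpa using h) hn

theorem eq_C_add_sum_of_totalDegree_le_one [Fintype σ] [DecidableEq σ] {P : MvPolynomial σ R}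
    (h : P.totalDegree ≤ 1) :
    P = C (coeff 0 P) + ∑ i, C (coeff (Finsupp.single i 1) P) * X i := by
  ext s
  simp only [coeff_add, coeff_C, coeff_sum, coeff_C_mul, coeff_X, mul_ite, mul_one, mul_zero]
  by_cases hs0 : s = 0
  · subst hs0
    simp
  by_cases hs1 : ∃ i, Finsupp.single i 1 = s
  · obtain ⟨i, rfl⟩ := hs1
    simp [Finsupp.single_left_inj one_ne_zero, Ne.symm hs0]
  push Not at hs1
  have hdeg : 1 < s.degree := by
    have h0 : s.degree ≠ 0 := by rwa [Ne, Finsupp.degree_eq_zero_iff]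
    have h1 : s.degree ≠ 1 := fun h1 => by
      obtain ⟨i, hi⟩ := (Finsupp.range_single_one (σ := σ)).symm.subset h1
      exact hs1 i hi
    omega
  rw [coeff_eq_zero_of_totalDegree_lt (h.trans_lt hdeg)]
  simp [Ne.symm hs0, hs1]

theorem eval_eq_of_totalDegree_le_one [Fintype σ] {P : MvPolynomial σ R}
    (h : P.totalDegree ≤ 1) (x : σ → R) :
    eval x P = coeff 0 P + ∑ i, coeff (Finsupp.single i 1) P * x i := by
  classical
  conv_lhs => rw [eq_C_add_sum_of_totalDegree_le_one h]
  simp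

end Degree

end MvPolynomial

namespace MultiIdx

def single {d p : ℕ} (k : Fin d) (e : ℕ) (he : e ≤ p) : MultiIdx d p :=
  ⟨Pi.single k ⟨e, Nat.lt_succ_of_le he⟩, by simp [Pi.single_apply, apply_ite Fin.val, he]⟩

noncomputable def monomial {d p : ℕ} (m : MultiIdx d p) : MvPolynomial (Fin d) ℝ :=
  ∏ k, X k ^ (m.1 k : ℕ)

variable {d p : ℕ}

theorem eval_monomial (m : MultiIdx d p) (y : Fin d → ℝ) : eval y m.monomial = phi d p y m := by
  simp [monomial, phi]

theorem totalDegree_monomial_le (m : MultiIdx d p) : m.monomial.totalDegree ≤ p :=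
  (totalDegree_finsetProd _ _).trans <| by simpa [totalDegree_X_pow] using m.2

end MultiIdx

theorem phi_single {d p : ℕ} (y : Fin d → ℝ) (k : Fin d) (e : ℕ) (he : e ≤ p) :
    phi d p y (MultiIdx.single k e he) = y k ^ e := by
  rw [phi, Finset.prod_eq_single k] <;> simp +contextual [MultiIdx.single]

theorem exists_totalDegree_le_eval_eq_phi {d p : ℕ} (L : (MultiIdx d p → ℝ) →ₗ[ℝ] ℝ) :
    ∃ P : MvPolynomial (Fin d) ℝ, P.totalDegree ≤ p ∧ ∀ y, eval y P = L (phi d p y) := by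
  classical
  refine ⟨∑ m, C (L (Pi.single m 1)) * m.monomial, ?_, fun y => ?_⟩
  · refine (totalDegree_finsetSum _ _).trans (Finset.sup_le fun m _ => ?_)
    exact (totalDegree_mul _ _).trans (by simpa using m.totalDegree_monomial_le)
  · conv_rhs => rw [← Finset.univ_sum_single (phi d p y)]
    simp only [map_sum, map_mul, eval_C, MultiIdx.eval_monomial]
    refine Finset.sum_congr rfl fun m _ => ?_
    rw [mul_comm, ← smul_eq_mul, ← L.map_smul, ← Pi.single_smul', smul_eq_mul, mul_one]

theorem exists_mulVec_add_eq_of_phi_eq {d p : ℕ} (hp : 1 ≤ p)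
    (T : (MultiIdx d p → ℝ) →ₗ[ℝ] (MultiIdx d p → ℝ)) {Z : Set (Fin d → ℝ)}
    {w : (Fin d → ℝ) → (Fin d → ℝ)} (hT : ∀ z ∈ Z, T (phi d p (w z)) = phi d p z)
    (hint : (interior (w '' Z)).Nonempty) :
    ∃ (A : Matrix (Fin d) (Fin d) ℝ) (a : Fin d → ℝ), ∀ z ∈ Z, A *ᵥ w z + a = z := by
  choose P hPdeg hPeval using fun m => exists_totalDegree_le_eval_eq_phi (LinearMap.proj m ∘ₗ T)
  set P₁ := fun k => P (MultiIdx.single k 1 hp)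
  have hcoord : ∀ z ∈ Z, ∀ k, eval (w z) (P₁ k) = z k := by
    intro z hz k
    simp [P₁, hPeval, hT z hz, phi_single]
  have hpow : ∀ k, P₁ k ^ p = P (MultiIdx.single k p le_rfl) := fun k =>
    eq_of_eqOn_of_nonempty_interior hint <| by
      rintro _ ⟨z, hz, rfl⟩
      simp [hcoord z hz, hPeval, hT z hz, phi_single]
  have hdeg : ∀ k, (P₁ k).totalDegree ≤ 1 := fun k =>
    totalDegree_le_one_of_totalDegree_pow_le hp ((hpow k).symm ▸ hPdeg _)
  refine ⟨Matrix.of fun k i => coeff (Finsupp.single i 1) (P₁ k), fun k => coeff 0 (P₁ k),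
    fun z hz => funext fun k => ?_⟩
  rw [← hcoord z hz k, eval_eq_of_totalDegree_le_one (hdeg k)]
  simp [Matrix.mulVec, dotProduct, add_comm, mul_comm]

theorem Matrix.isUnit_of_subset_range_mulVec_add {ι : Type*} [Fintype ι] [DecidableEq ι]
    (A : Matrix ι ι ℝ) (a : ι → ℝ) {Z : Set (ι → ℝ)} (hZ : (interior Z).Nonempty)
    (hA : Z ⊆ Set.range fun y => A *ᵥ y + a) : IsUnit A := by
  rw [← mulVec_surjective_iff_isUnit, ← Set.range_eq_univ]
  suffices LinearMap.range A.mulVecLin = ⊤ from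
    congrArg ((↑) : Submodule ℝ (ι → ℝ) → Set (ι → ℝ)) this
  obtain ⟨z, hz⟩ := hZ
  refine Submodule.eq_top_of_nonempty_interior' _ ⟨z - a, interior_maximal ?_
    (isOpenMap_sub_right a _ isOpen_interior) ⟨z, hz, rfl⟩⟩
  rintro _ ⟨x, hx, rfl⟩
  obtain ⟨y, rfl⟩ := hA (interior_subset hx)
  exact ⟨y, by simp⟩

section BoxCorner

variable {ι : Type*} (lo hi : ι → ℝ)

/-- The vertex of the box `[lo, hi]` at which `u ⬝ᵥ ·` is maximal. -/
noncomputable def boxCorner (u : ι → ℝ) : ι → ℝ := fun j => if 0 ≤ u j then hi j else lo j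

variable {lo hi}

theorem mul_boxCorner_sub_eq {u z : ι → ℝ} {j : ι} (hz : lo j ≤ z j ∧ z j ≤ hi j) :
    u j * (boxCorner lo hi u j - z j) = |u j| * |boxCorner lo hi u j - z j| := by
  unfold boxCorner
  split_ifs with h
  · rw [abs_of_nonneg h, abs_of_nonneg (by linarith)]
  · rw [abs_of_neg (not_le.mp h), abs_of_nonpos (by linarith)]
    ring

theorem boxCorner_neg_apply_ne {u : ι → ℝ} {s : ι} (hus : u s ≠ 0) (hlh : lo s ≠ hi s) :
    boxCorner lo hi (-u) s ≠ boxCorner lo hi u s := by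
  simp only [boxCorner, Pi.neg_apply, neg_nonneg]
  split_ifs <;> grind

variable [Fintype ι]

theorem abs_mul_abs_sub_le_dotProduct_boxCorner_sub {u z : ι → ℝ}
    (hz : ∀ j, lo j ≤ z j ∧ z j ≤ hi j) (s : ι) :
    |u s| * |boxCorner lo hi u s - z s| ≤ u ⬝ᵥ boxCorner lo hi u - u ⬝ᵥ z := by
  rw [← dotProduct_sub, dotProduct, ← mul_boxCorner_sub_eq (hz s)]
  refine Finset.single_le_sum (f := fun j => u j * (boxCorner lo hi u - z) j)
    (fun j _ => ?_) (Finset.mem_univ s)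
  simp only [Pi.sub_apply, mul_boxCorner_sub_eq (hz j)]
  positivity

theorem exists_mem_dotProduct_boxCorner_sub_lt {ζ : ℝ} (hζ : 0 < ζ) {Z : Set (ι → ℝ)}
    (hZ : Set.univ.pi (fun r => Set.Ioo (lo r) (lo r + ζ) ∪ Set.Ioo (hi r - ζ) (hi r)) ⊆ Z)
    (u : ι → ℝ) {ε : ℝ} (hε : 0 < ε) :
    ∃ z ∈ Z, u ⬝ᵥ boxCorner lo hi u - u ⬝ᵥ z < ε := by
  obtain ⟨η, hη, hηε⟩ := exists_pos_mul_lt hε (∑ j, |u j|)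
  set η' := min η (ζ / 2)
  have hη' : 0 < η' := lt_min hη (half_pos hζ)
  have hη'ζ : η' < ζ := (min_le_right _ _).trans_lt (half_lt_self hζ)
  refine ⟨fun j => if 0 ≤ u j then hi j - η' else lo j + η', hZ fun j _ => ?_, ?_⟩
  · dsimp only
    split_ifs
    · exact Or.inr ⟨by linarith, by linarith⟩
    · exact Or.inl ⟨by linarith, by linarith⟩
  calc u ⬝ᵥ boxCorner lo hi u - u ⬝ᵥ _ = (∑ j, |u j|) * η' := by
        rw [← dotProduct_sub, dotProduct, Finset.sum_mul]
        refine Finset.sum_congr rfl fun j _ => ?_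
        simp only [boxCorner, Pi.sub_apply]
        split_ifs with h
        · rw [abs_of_nonneg h]
          ring
        · rw [abs_of_neg (not_le.mp h)]
          ring
    _ ≤ (∑ j, |u j|) * η := by gcongr; exact min_le_left _ _
    _ < ε := hηε

theorem boxCorner_apply_eq_of_forall_exists_dotProduct_eq {Z : Set (ι → ℝ)}
    (hbox : ∀ z ∈ Z, ∀ j, lo j ≤ z j ∧ z j ≤ hi j)
    (happrox : ∀ u : ι → ℝ, ∀ ε > 0, ∃ z ∈ Z, u ⬝ᵥ boxCorner lo hi u - u ⬝ᵥ z < ε)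
    {u v : ι → ℝ} {s : ι} (hlt : lo s < hi s) (hus : u s ≠ 0) (hvs : v s ≠ 0)
    (huv : ∀ z₁ ∈ Z, ∀ z₂ ∈ Z, ∃ z ∈ Z, u ⬝ᵥ z = u ⬝ᵥ z₁ ∧ v ⬝ᵥ z = v ⬝ᵥ z₂) :
    boxCorner lo hi u s = boxCorner lo hi v s := by
  set δ := (hi s - lo s) / 2
  have hδ : 0 < δ := half_pos (sub_pos.mpr hlt)
  have pin : ∀ {x : ι → ℝ}, x s ≠ 0 → ∀ z ∈ Z,
      x ⬝ᵥ boxCorner lo hi x - x ⬝ᵥ z < |x s| * δ → |boxCorner lo hi x s - z s| < δ :=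
    fun hxs z hz hlt => lt_of_mul_lt_mul_left
      ((abs_mul_abs_sub_le_dotProduct_boxCorner_sub (hbox z hz) s).trans_lt hlt) (abs_nonneg _)
  obtain ⟨z₁, hz₁, h₁⟩ := happrox u _ (mul_pos (abs_pos.mpr hus) hδ)
  obtain ⟨z₂, hz₂, h₂⟩ := happrox v _ (mul_pos (abs_pos.mpr hvs) hδ)
  obtain ⟨z, hz, hzu, hzv⟩ := huv z₁ hz₁ z₂ hz₂
  have hu := pin hus z hz (hzu ▸ h₁)
  have hv := pin hvs z hz (hzv ▸ h₂)
  obtain ⟨h₃, h₄⟩ := abs_lt.mp <| (abs_sub_le _ (z s) _).trans_lt <|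
    (add_lt_add hu (abs_sub_comm (z s) _ ▸ hv)).trans_eq (add_halves _)
  unfold boxCorner at h₃ h₄ ⊢
  split_ifs at h₃ h₄ ⊢ <;> first | rfl | linarith

theorem Matrix.eq_of_apply_ne_zero_of_forall_exists_dotProduct_eq {Z : Set (ι → ℝ)}
    (hbox : ∀ z ∈ Z, ∀ j, lo j ≤ z j ∧ z j ≤ hi j)
    (happrox : ∀ u : ι → ℝ, ∀ ε > 0, ∃ z ∈ Z, u ⬝ᵥ boxCorner lo hi u - u ⬝ᵥ z < ε)
    (hlt : ∀ j, lo j < hi j) {M : Matrix ι ι ℝ}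
    (hM : ∀ k m, k ≠ m → ∀ z₁ ∈ Z, ∀ z₂ ∈ Z, ∃ z ∈ Z, M k ⬝ᵥ z = M k ⬝ᵥ z₁ ∧ M m ⬝ᵥ z = M m ⬝ᵥ z₂)
    {k m s : ι} (hk : M k s ≠ 0) (hm : M m s ≠ 0) : k = m := by
  by_contra hkm
  have h₁ := boxCorner_apply_eq_of_forall_exists_dotProduct_eq hbox happrox (hlt s) hk hm
    (hM k m hkm)
  have h₂ := boxCorner_apply_eq_of_forall_exists_dotProduct_eq hbox happrox (hlt s) hk
    (v := -M m) (neg_ne_zero.mpr hm) fun z₁ h₁ z₂ h₂ => by simpa using hM k m hkm z₁ h₁ z₂ h₂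
  exact boxCorner_neg_apply_ne hm (hlt s).ne (h₂.symm.trans h₁)

end BoxCorner

theorem Matrix.exists_mulVec_eq_diagonal_mulVec_comp_perm {ι R : Type*} [Fintype ι]
    [DecidableEq ι] [CommRing R] [Nontrivial R] {M : Matrix ι ι R} (hM : IsUnit M)
    (hcol : ∀ {k m s}, M k s ≠ 0 → M m s ≠ 0 → k = m) :
    ∃ (Λ : ι → R) (σ : Equiv.Perm ι), (∀ r, Λ r ≠ 0) ∧
      ∀ z, M *ᵥ z = diagonal Λ *ᵥ fun r => z (σ r) := by
  have hrow : ∀ r, ∃ s, M r s ≠ 0 := by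
    intro r
    obtain ⟨z, hz⟩ := mulVec_surjective_iff_isUnit.mpr hM (Pi.single r 1)
    by_contra! h
    simpa [mulVec, dotProduct, h] using congrFun hz r
  choose τ hτ using hrow
  have hτ_inj : τ.Injective := fun r r' h => hcol (hτ r) (h ▸ hτ r')
  set σ := Equiv.ofBijective τ (Finite.injective_iff_bijective.mp hτ_inj)
  refine ⟨fun r => M r (σ r), σ, hτ, fun z => funext fun r => ?_⟩
  rw [mulVec_diagonal, mulVec, dotProduct, Finset.sum_eq_single (σ r)]
  · intro s _ hs
    obtain ⟨r', rfl⟩ := σ.surjective s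
    rw [mul_eq_zero_of_left]
    by_contra h
    exact hs (by rw [hcol h (hτ r')])
  · simp

theorem exists_mem_dotProduct_eq_of_proj2_eq {d : ℕ} {Z : Set (Fin d → ℝ)}
    {w : (Fin d → ℝ) → (Fin d → ℝ)} {M : Matrix (Fin d) (Fin d) ℝ} {c : Fin d → ℝ}
    (hw : ∀ z ∈ Z, w z = M *ᵥ z + c) {k m : Fin d}
    (h : proj2 k m (w '' Z) = proj k (w '' Z) ×ˢ proj m (w '' Z)) :
    ∀ z₁ ∈ Z, ∀ z₂ ∈ Z, ∃ z ∈ Z, M k ⬝ᵥ z = M k ⬝ᵥ z₁ ∧ M m ⬝ᵥ z = M m ⬝ᵥ z₂ := by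
  intro z₁ h₁ z₂ h₂
  have hmem : (w z₁ k, w z₂ m) ∈ proj2 k m (w '' Z) :=
    h ▸ ⟨⟨w z₁, Set.mem_image_of_mem w h₁, rfl⟩, ⟨w z₂, Set.mem_image_of_mem w h₂, rfl⟩⟩
  obtain ⟨_, ⟨z, hz, rfl⟩, he⟩ := hmem
  simp only [Prod.mk.injEq, hw z hz, hw z₁ h₁, hw z₂ h₂, Pi.add_apply, add_left_inj] at he
  exact ⟨z, hz, he⟩

theorem permutation_scaling_identification_independent_support_general
    (d n p : ℕ) (hp : 1 ≤ p)
    (Z : Set (Fin d → ℝ)) (hZ : (interior Z).Nonempty)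
    (βinf βsup : Fin d → ℝ)
    (hglb : ∀ r, IsGLB (proj r Z) (βinf r))
    (hlub : ∀ r, IsLUB (proj r Z) (βsup r))
    (ζ : ℝ) (hζ : 0 < ζ)
    (B : Fin d → Set ℝ)
    (hB : ∀ r, B r =
      Set.Ioo (βinf r) (βinf r + ζ) ∪ Set.Ioo (βsup r - ζ) (βsup r))
    (hBsub : ∀ r, B r ⊆ proj r Z)
    (hBprod : Set.univ.pi B ⊆ Z)
    (G H : Matrix (Fin n) (MultiIdx d p) ℝ)
    (hG : Function.Injective G.mulVec)
    (f : (Fin n → ℝ) → (Fin d → ℝ))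
    (hrec : ∀ x ∈ (fun z => G.mulVec (phi d p z)) '' Z,
      H.mulVec (phi d p (f x)) = x)
    (himg : (interior (f '' ((fun z => G.mulVec (phi d p z)) '' Z))).Nonempty)
    (hsupphat : ∀ k m : Fin d, k ≠ m →
      proj2 k m (f '' ((fun z => G.mulVec (phi d p z)) '' Z)) =
        (proj k (f '' ((fun z => G.mulVec (phi d p z)) '' Z))) ×ˢ
        (proj m (f '' ((fun z => G.mulVec (phi d p z)) '' Z)))) :
    ∃ (Λ : Fin d → ℝ) (σ : Equiv.Perm (Fin d)) (c : Fin d → ℝ),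
      (∀ r, Λ r ≠ 0) ∧
      ∀ z ∈ Z, f (G.mulVec (phi d p z)) =
        (Matrix.diagonal Λ).mulVec (fun r => z (σ r)) + c := by
  classical
  set w := fun z => f (G *ᵥ phi d p z)
  rw [Set.image_image] at himg hsupphat
  obtain ⟨l, hl⟩ := G.mulVecLin.exists_leftInverse_of_injective (LinearMap.ker_eq_bot.mpr hG)
  have hT : ∀ z ∈ Z, (l ∘ₗ H.mulVecLin) (phi d p (w z)) = phi d p z := fun z hz => by
    simpa [w, hrec _ ⟨z, hz, rfl⟩] using LinearMap.congr_fun hl (phi d p z)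
  obtain ⟨A, a, hA⟩ := exists_mulVec_add_eq_of_phi_eq hp _ hT himg
  have hA_unit : IsUnit A := A.isUnit_of_subset_range_mulVec_add a hZ fun z hz => ⟨w z, hA z hz⟩
  have hw : ∀ z ∈ Z, w z = A⁻¹ *ᵥ z + -(A⁻¹ *ᵥ a) := fun z hz => by
    conv_rhs => rw [← hA z hz]
    rw [mulVec_add, mulVec_mulVec, nonsing_inv_mul _ ((isUnit_iff_isUnit_det A).mp hA_unit),
      one_mulVec, add_neg_cancel_right]
  have hbox : ∀ z ∈ Z, ∀ j, βinf j ≤ z j ∧ z j ≤ βsup j := fun z hz j =>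
    ⟨(hglb j).1 ⟨z, hz, rfl⟩, (hlub j).1 ⟨z, hz, rfl⟩⟩
  have hlt : ∀ j, βinf j < βsup j := fun j => by
    have := (hlub j).1 (hBsub j (by rw [hB j]; exact Or.inl ⟨by linarith, by linarith⟩) :
      βinf j + ζ / 2 ∈ proj j Z)
    linarith
  rw [funext hB] at hBprod
  obtain ⟨Λ, σ, hΛ, hM⟩ := exists_mulVec_eq_diagonal_mulVec_comp_perm
    (isUnit_nonsing_inv_iff.mpr hA_unit)
    (eq_of_apply_ne_zero_of_forall_exists_dotProduct_eq hbox
      (fun u ε hε => exists_mem_dotProduct_boxCorner_sub_lt hζ hBprod u hε) hlt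
      (fun k m hkm => exists_mem_dotProduct_eq_of_proj2_eq hw (hsupphat k m hkm)))
  exact ⟨Λ, σ, _, hΛ, fun z hz => (hw z hz).trans (by rw [hM])⟩

/-- **identification up to permutation, shift and scaling from observational
data with independent support.**  The observational support `Z` has bounded coordinate
projections with `ζ`-thick boundary strips `B r` contained in the projections and whose
product lies in `Z`, and satisfies pairwise support independence.  If the full-column-rank
polynomial decoder `g`, learned polynomial decoder `h`, and encoder `f` satisfy the
reconstruction identity on `g(Z)` with the interior conditions, and the encoder output
support `Ẑ = f(g(Z))` satisfies pairwise support independence, then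
`f (g z) = Λ Π z + c` on `Z`, where `Π` is the permutation (matrix) of a permutation `σ`
and `Λ` is an invertible diagonal matrix. -/
theorem permutation_scaling_identification_independent_support
    (d n p : ℕ) (hd : 1 ≤ d) (hn : 1 ≤ n) (hp : 1 ≤ p)
    (Z : Set (Fin d → ℝ)) (hZ : (interior Z).Nonempty)
    (βinf βsup : Fin d → ℝ)
    (hglb : ∀ r, IsGLB (proj r Z) (βinf r))
    (hlub : ∀ r, IsLUB (proj r Z) (βsup r))
    (ζ : ℝ) (hζ : 0 < ζ)
    (B : Fin d → Set ℝ)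
    (hB : ∀ r, B r =
      Set.Ioo (βinf r) (βinf r + ζ) ∪ Set.Ioo (βsup r - ζ) (βsup r))
    (hBsub : ∀ r, B r ⊆ proj r Z)
    (hBprod : Set.univ.pi B ⊆ Z)
    (hsupp : ∀ r s : Fin d, r ≠ s → proj2 r s Z = (proj r Z) ×ˢ (proj s Z))
    (G H : Matrix (Fin n) (MultiIdx d p) ℝ)
    (hG : Function.Injective G.mulVec)
    (f : (Fin n → ℝ) → (Fin d → ℝ))
    (hrec : ∀ x ∈ (fun z => G.mulVec (phi d p z)) '' Z,
      H.mulVec (phi d p (f x)) = x)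
    (himg : (interior (f '' ((fun z => G.mulVec (phi d p z)) '' Z))).Nonempty)
    (hsupphat : ∀ k m : Fin d, k ≠ m →
      proj2 k m (f '' ((fun z => G.mulVec (phi d p z)) '' Z)) =
        (proj k (f '' ((fun z => G.mulVec (phi d p z)) '' Z))) ×ˢ
        (proj m (f '' ((fun z => G.mulVec (phi d p z)) '' Z)))) :
    ∃ (Λ : Fin d → ℝ) (σ : Equiv.Perm (Fin d)) (c : Fin d → ℝ),
      (∀ r, Λ r ≠ 0) ∧
      ∀ z ∈ Z, f (G.mulVec (phi d p z)) =
        (Matrix.diagonal Λ).mulVec (fun r => z (σ r)) + c :=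
  permutation_scaling_identification_independent_support_general d n p hp Z hZ βinf βsup hglb hlub ζ
    hζ B hB hBsub hBprod G H hG f hrec himg hsupphat
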